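/- Let A, B be positive real numbers and c a positive integer, and define x_k = A·C(c,k) + B·C(c,k−1) for integers k. Then the sequence (x_k) for k = 0, 1, …, c is log-concave: x_k^2 ≥ x_{k−1}·x_{k+1} for all 1 ≤ k ≤ c−1. -/
import Mathlib


/-- `rchoose n k` is the binomial coefficient `C(n,k)` for integer arguments, as a real
number, equal to `0` unless `0 ≤ k ≤ n`. -/
noncomputable def rchoose (n k : ℤ) : ℝ :=
  if 0 ≤ k ∧ k ≤ n then (n.toNat.choose k.toNat : ℝ) else 0

lemma rchoose_nonneg (n k : ℤ) : 0 ≤ rchoose n k := by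
  unfold rchoose; split <;> positivity

lemma nat_choose_ineq (n i j : ℕ) (h : i ≤ j) :
    n.choose i * n.choose (j + 1) ≤ n.choose (i + 1) * n.choose j := by
  have h1 : n.choose (i + 1) * (i + 1) = n.choose i * (n - i) := Nat.choose_succ_right_eq n i
  have h2 : n.choose (j + 1) * (j + 1) = n.choose j * (n - j) := Nat.choose_succ_right_eq n j
  have key : n.choose i * n.choose (j + 1) * ((i + 1) * (j + 1)) ≤
      n.choose (i + 1) * n.choose j * ((i + 1) * (j + 1)) := by
    have e1 : n.choose i * n.choose (j + 1) * ((i + 1) * (j + 1)) =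
        (n.choose i * n.choose j) * ((n - j) * (i + 1)) := by
      calc n.choose i * n.choose (j + 1) * ((i + 1) * (j + 1))
          = n.choose i * (n.choose (j + 1) * (j + 1)) * (i + 1) := by ring
        _ = n.choose i * (n.choose j * (n - j)) * (i + 1) := by rw [h2]
        _ = (n.choose i * n.choose j) * ((n - j) * (i + 1)) := by ring
    have e2 : n.choose (i + 1) * n.choose j * ((i + 1) * (j + 1)) =
        (n.choose i * n.choose j) * ((n - i) * (j + 1)) := by
      calc n.choose (i + 1) * n.choose j * ((i + 1) * (j + 1))
          = (n.choose (i + 1) * (i + 1)) * n.choose j * (j + 1) := by ring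
        _ = (n.choose i * (n - i)) * n.choose j * (j + 1) := by rw [h1]
        _ = (n.choose i * n.choose j) * ((n - i) * (j + 1)) := by ring
    rw [e1, e2]
    exact Nat.mul_le_mul_left _ (Nat.mul_le_mul (Nat.sub_le_sub_left h n) (by omega))
  exact Nat.le_of_mul_le_mul_right key (by positivity)

lemma rchoose_ineq (n i j : ℤ) (hn : 0 ≤ n) (hij : i ≤ j) :
    rchoose n (i - 1) * rchoose n (j + 1) ≤ rchoose n i * rchoose n j := by
  by_cases h1 : 0 ≤ i - 1
  · by_cases h2 : j + 1 ≤ n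
    · have hi : 0 ≤ i := by omega
      have hj : 0 ≤ j := by omega
      have hin : i ≤ n := by omega
      have hjn : j ≤ n := by omega
      rw [rchoose, rchoose, rchoose, rchoose, if_pos ⟨h1, by omega⟩, if_pos ⟨by omega, h2⟩,
        if_pos ⟨hi, hin⟩, if_pos ⟨hj, hjn⟩]
      have ei : i.toNat = (i - 1).toNat + 1 := by omega
      have ej : (j + 1).toNat = j.toNat + 1 := by omega
      rw [ei, ej]
      have := nat_choose_ineq n.toNat (i - 1).toNat j.toNat (by omega)
      exact_mod_cast this
    · have : rchoose n (j + 1) = 0 := by rw [rchoose, if_neg (by omega)]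
      rw [this, mul_zero]
      exact mul_nonneg (rchoose_nonneg _ _) (rchoose_nonneg _ _)
  · have : rchoose n (i - 1) = 0 := by rw [rchoose, if_neg (by omega)]
    rw [this, zero_mul]
    exact mul_nonneg (rchoose_nonneg _ _) (rchoose_nonneg _ _)

/-- For positive reals `A, B` and a positive integer `c`, the sequence
`x k = A·C(c,k) + B·C(c,k-1)` is log-concave for `k = 0, 1, …, c`:
`x_k² ≥ x_{k-1}·x_{k+1}` for all `1 ≤ k ≤ c-1`. -/
theorem binomial_combination_log_concave (A B : ℝ) (hA : 0 < A) (hB : 0 < B)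
    (c : ℕ) (hc : 0 < c) (x : ℤ → ℝ)
    (hx : ∀ k : ℤ, x k = A * rchoose c k + B * rchoose c (k - 1)) :
    ∀ k : ℤ, 1 ≤ k → k ≤ (c : ℤ) - 1 → x (k - 1) * x (k + 1) ≤ x k ^ 2 := by
  intro k hk1 hk2
  have hn : (0 : ℤ) ≤ (c : ℤ) := by positivity
  have I1 : rchoose c (k - 1) * rchoose c (k + 1) ≤ rchoose c k * rchoose c k :=
    rchoose_ineq c k k hn le_rfl
  have I2 : rchoose c (k - 1 - 1) * rchoose c (k - 1 + 1) ≤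
      rchoose c (k - 1) * rchoose c (k - 1) := rchoose_ineq c (k - 1) (k - 1) hn le_rfl
  have I3 : rchoose c (k - 1 - 1) * rchoose c (k + 1) ≤
      rchoose c (k - 1) * rchoose c k := rchoose_ineq c (k - 1) k hn (by omega)
  have ekk : k - 1 + 1 = k := by ring
  rw [ekk] at I2
  have e1 : x (k - 1) = A * rchoose c (k - 1) + B * rchoose c (k - 1 - 1) := hx (k - 1)
  have e2 : x k = A * rchoose c k + B * rchoose c (k - 1) := hx k
  have e3 : x (k + 1) = A * rchoose c (k + 1) + B * rchoose c (k + 1 - 1) := hx (k + 1)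
  have ek : k + 1 - 1 = k := by ring
  rw [ek] at e3
  rw [e1, e2, e3]
  nlinarith [mul_le_mul_of_nonneg_left I1 (mul_pos hA hA).le,
    mul_le_mul_of_nonneg_left I2 (mul_pos hB hB).le,
    mul_le_mul_of_nonneg_left I3 (mul_pos hA hB).le,
    rchoose_nonneg (c : ℤ) (k - 1), rchoose_nonneg (c : ℤ) k]
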